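/- arXiv:1806.06956 — 3 statements merged into one kernel-verified Lean document; each statement's English description precedes it below -/
import Mathlib

section
/- Let H be a real Hilbert space, S a self-adjoint positive semidefinite contraction on H, λ ∈ (0,1), f ∈ H, and E(u) = -(1/2)⟪u, (S - I) u⟫ + (λ/2)⟪u - f, S (u - f)⟫. Then for all u ∈ H, E(u) ≥ (λ/2)(‖u‖ - ‖S f‖)² + (λ/2)(⟪f, S f⟫ - ‖S f‖²). In particular the sublevel sets of E are bounded. -/
open RealInnerProductSpace

theorem stmt_5 {H : Type*} [NormedAddCommGroup H] [InnerProductSpace ℝ H] [CompleteSpace H]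
    (S : H →L[ℝ] H)
    (hsa : ∀ u v : H, ⟪S u, v⟫ = ⟪u, S v⟫)
    (hpos : ∀ u : H, 0 ≤ ⟪S u, u⟫)
    (hcontr : ∀ u : H, ‖S u‖ ≤ ‖u‖)
    (l : ℝ) (hl0 : 0 < l) (hl1 : l < 1) (f : H)
    (E : H → ℝ)
    (hE : ∀ u : H, E u = -(1/2) * ⟪u, S u - u⟫ + (l/2) * ⟪u - f, S (u - f)⟫) :
    ∀ u : H, (l/2) * (‖u‖ - ‖S f‖)^2 + (l/2) * (⟪f, S f⟫ - ‖S f‖^2) ≤ E u := by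
  intro u
  have h1 : ⟪u, S u⟫ ≤ ‖u‖^2 := by
    calc ⟪u, S u⟫ ≤ ‖u‖ * ‖S u‖ := real_inner_le_norm u (S u)
    _ ≤ ‖u‖ * ‖u‖ := by
        have := hcontr u
        nlinarith [norm_nonneg u]
    _ = ‖u‖^2 := (sq ‖u‖).symm
  have h2 : ⟪u, S f⟫ ≤ ‖u‖ * ‖S f‖ := real_inner_le_norm u (S f)
  have h3 : ⟪f, S u⟫ = ⟪u, S f⟫ := (hsa f u).symm.trans (real_inner_comm _ _)
  have h4 : ⟪u, u⟫ = ‖u‖^2 := real_inner_self_eq_norm_sq u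
  rw [hE u, map_sub]; simp only [inner_sub_left, inner_sub_right]; rw [h3, h4]
  nlinarith [sq_nonneg (‖u‖ - ‖S f‖), mul_le_mul_of_nonneg_left h1 (by linarith : (0:ℝ) ≤ 1 - l), mul_le_mul_of_nonneg_left h2 hl0.le]
end

section
/- Let H be a real Hilbert space, K ⊆ H a nonempty closed convex set, S a self-adjoint positive semidefinite contraction on H, λ ∈ (0,1), f ∈ H, and E(u) = -(1/2)⟪u, (S - I) u⟫ + (λ/2)⟪u - f, S (u - f)⟫. Let u⋆ be the unique minimizer of E over K. Then u⋆ is a fixed point of the iteration map: u⋆ = Π_K(S((1 - λ) u⋆ + λ f)), where Π_K is the metric projection onto K. -/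
open RealInnerProductSpace

lemma key_lemma (G Q : ℝ) (h : ∀ t : ℝ, 0 < t → t ≤ 1 → 0 ≤ t * G + t^2 * Q) : 0 ≤ G := by
  by_contra hG
  push_neg at hG
  have hQ1 : (0:ℝ) < |Q| + 1 := by positivity
  set t : ℝ := min 1 (-G / (|Q| + 1)) with ht
  have ht0 : 0 < t := lt_min one_pos (div_pos (by linarith) hQ1)
  have ht1 : t ≤ 1 := min_le_left _ _
  have ht2 : t ≤ -G / (|Q| + 1) := min_le_right _ _
  have h1 := h t ht0 ht1
  have habs : Q ≤ |Q| := le_abs_self Q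
  have h0 : t * Q ≤ t * |Q| := by nlinarith
  have htQ : t * |Q| ≤ -G * (|Q| / (|Q|+1)) := by
    have := abs_nonneg Q
    calc t * |Q| ≤ (-G / (|Q|+1)) * |Q| := by nlinarith
    _ = -G * (|Q| / (|Q|+1)) := by ring
  have hfrac : |Q| / (|Q|+1) < 1 := by
    rw [div_lt_one hQ1]; linarith
  have h2 : t * Q < -G := by nlinarith
  have h3 : t * (G + t * Q) < 0 := mul_neg_of_pos_of_neg ht0 (by linarith)
  nlinarith

lemma proj_vi {H : Type*} [NormedAddCommGroup H] [InnerProductSpace ℝ H]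
    {K : Set H} (hKv : Convex ℝ K) {x p : H} (hp : p ∈ K)
    (hd : ∀ y ∈ K, ‖p - x‖ ≤ ‖y - x‖) {y : H} (hy : y ∈ K) :
    ⟪x - p, y - p⟫ ≤ 0 := by
  have key := key_lemma (2 * ⟪p - x, y - p⟫) (‖y - p‖^2) ?_
  · have hneg : ⟪x - p, y - p⟫ = -⟪p - x, y - p⟫ := by
      rw [← inner_neg_left]; congr 1; abel
    linarith
  · intro t ht0 ht1
    have hmemt : p + t • (y - p) ∈ K := by
      have h := hKv hp hy (by linarith : (0:ℝ) ≤ 1 - t) ht0.le (by ring)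
      convert h using 1
      module
    have hle := hd _ hmemt
    have hsq : ‖p - x‖^2 ≤ ‖p + t • (y - p) - x‖^2 := by
      nlinarith [norm_nonneg (p - x), norm_nonneg (p + t • (y - p) - x)]
    have hrw : p + t • (y - p) - x = (p - x) + t • (y - p) := by module
    rw [hrw, norm_add_sq_real, real_inner_smul_right, norm_smul] at hsq
    rw [Real.norm_eq_abs, abs_of_pos ht0] at hsq
    nlinarith [norm_nonneg (y - p)]

lemma E_expand {H : Type*} [NormedAddCommGroup H] [InnerProductSpace ℝ H]
    (S : H →L[ℝ] H) (hsa : ∀ u v : H, ⟪S u, v⟫ = ⟪u, S v⟫)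
    (l : ℝ) (f u w : H) (E : H → ℝ)
    (hE : ∀ u : H, E u = -(1/2) * ⟪u, S u - u⟫ + (l/2) * ⟪u - f, S (u - f)⟫)
    (t : ℝ) :
    E (u + t • w) - E u =
      t * (⟪u, w⟫ - (1-l) * ⟪S u, w⟫ - l * ⟪S f, w⟫)
      + t^2 * ((1/2) * ⟪w, w⟫ - ((1-l)/2) * ⟪w, S w⟫) := by
  rw [hE, hE]
  simp only [map_add, map_smul, map_sub, inner_add_left, inner_add_right,
    inner_sub_left, inner_sub_right, real_inner_smul_left, real_inner_smul_right, hsa]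
  have e1 : ⟪w, S u⟫ = ⟪u, S w⟫ := by rw [← hsa, real_inner_comm]
  have e2 : ⟪f, S w⟫ = ⟪w, S f⟫ := by rw [← hsa, real_inner_comm]
  have e3 : ⟪w, u⟫ = ⟪u, w⟫ := real_inner_comm _ _
  rw [e1, e2, e3]; ring

theorem stmt_8 {H : Type*} [NormedAddCommGroup H] [InnerProductSpace ℝ H] [CompleteSpace H]
    (S : H →L[ℝ] H)
    (hsa : ∀ u v : H, ⟪S u, v⟫ = ⟪u, S v⟫)
    (hpos : ∀ u : H, 0 ≤ ⟪S u, u⟫)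
    (hcontr : ∀ u : H, ‖S u‖ ≤ ‖u‖)
    (l : ℝ) (hl0 : 0 < l) (hl1 : l < 1) (f : H)
    (E : H → ℝ)
    (hE : ∀ u : H, E u = -(1/2) * ⟪u, S u - u⟫ + (l/2) * ⟪u - f, S (u - f)⟫)
    (K : Set H) (hK : K.Nonempty) (hKc : IsClosed K) (hKv : Convex ℝ K)
    (proj : H → H)
    (hproj : ∀ x : H, proj x ∈ K ∧ ∀ y ∈ K, ‖proj x - x‖ ≤ ‖y - x‖)
    (ustar : H) (hmem : ustar ∈ K)
    (hmin : ∀ v ∈ K, E ustar ≤ E v)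
    (huniq : ∀ w ∈ K, (∀ v ∈ K, E w ≤ E v) → w = ustar) :
    ustar = proj (S ((1 - l) • ustar + l • f)) := by
  set x : H := S ((1 - l) • ustar + l • f) with hx
  -- variational inequality at the minimizer
  have hVIu : ∀ v ∈ K, ⟪x - ustar, v - ustar⟫ ≤ 0 := by
    intro v hv
    set w : H := v - ustar with hw
    have key := key_lemma (⟪ustar, w⟫ - (1-l) * ⟪S ustar, w⟫ - l * ⟪S f, w⟫)
      ((1/2) * ⟪w, w⟫ - ((1-l)/2) * ⟪w, S w⟫) ?_
    · have hxw : ⟪x - ustar, w⟫ =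
          -(⟪ustar, w⟫ - (1-l) * ⟪S ustar, w⟫ - l * ⟪S f, w⟫) := by
        rw [hx]
        simp only [inner_sub_left, map_add, map_smul, inner_add_left, real_inner_smul_left]
        ring
      rw [hw] at hxw ⊢
      linarith
    · intro t ht0 ht1
      have hmemt : ustar + t • w ∈ K := by
        have h := hKv hmem hv (by linarith : (0:ℝ) ≤ 1 - t) ht0.le (by ring)
        convert h using 1
        rw [hw]; module
      have hle := hmin _ hmemt
      have hexp := E_expand S hsa l f ustar w E hE t
      linarith
  obtain ⟨hpK, hpd⟩ := hproj x
  set p : H := proj x with hp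
  have h1 : ⟪x - p, ustar - p⟫ ≤ 0 := proj_vi hKv hpK hpd hmem
  have h2 : ⟪x - ustar, p - ustar⟫ ≤ 0 := hVIu p hpK
  have hdd : ⟪p - ustar, p - ustar⟫ ≤ 0 := by
    have hsum : ⟪p - ustar, p - ustar⟫ =
        ⟪x - ustar, p - ustar⟫ + ⟪x - p, ustar - p⟫ := by
      simp only [inner_sub_left, inner_sub_right]
      rw [real_inner_comm ustar p]
      ring
    linarith
  have h0 : ⟪p - ustar, p - ustar⟫ = 0 :=
    le_antisymm hdd real_inner_self_nonneg
  have : p - ustar = 0 := inner_self_eq_zero.mp h0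
  exact (sub_eq_zero.mp this).symm
end

section
/- Let H be a real Hilbert space, K ⊆ H nonempty closed convex, S a self-adjoint positive semidefinite contraction on H, λ ∈ (0,1), f ∈ H. Let u⋆ ∈ K be the unique minimizer over K of E(u) = -(1/2)⟪u, (S - I) u⟫ + (λ/2)⟪u - f, S (u - f)⟫. Then the iterates u_{n+1} = Π_K(S((1 - λ) u_n + λ f)), starting from any u₀ ∈ H, satisfy ‖u_n - u⋆‖ ≤ (1 - λ)ⁿ ‖u₀ - u⋆‖, and hence u_n → u⋆ strongly in H. -/
/-!
The energy is a quadratic whose gradient at `u` is `u - S((1 - λ)u + λf)`, so the first-order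
condition at the minimizer `u⋆` over the convex set `K` says exactly that `u⋆` is the projection
of `S((1 - λ)u⋆ + λf)` onto `K`. Comparing the variational inequalities satisfied by `u⋆` and by
`u_{n+1} = Π_K(S((1 - λ)u_n + λf))` bounds `‖u_{n+1} - u⋆‖` by
`‖S((1 - λ)(u_n - u⋆))‖ ≤ (1 - λ)‖u_n - u⋆‖`.
-/

open RealInnerProductSpace

open Set Filter Topology

lemma nonneg_of_forall_mul_add_sq_mul_nonneg {D Q : ℝ}
    (h : ∀ t ∈ Ioc (0 : ℝ) 1, 0 ≤ t * D + t ^ 2 * Q) : 0 ≤ D := by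
  have hlim : Tendsto (fun t => D + t * Q) (𝓝[>] 0) (𝓝 D) := by
    have : Tendsto (fun t : ℝ => D + t * Q) (𝓝 0) (𝓝 (D + 0 * Q)) :=
      (continuous_const.add (continuous_id.mul continuous_const)).tendsto 0
    simpa using this.mono_left nhdsWithin_le_nhds
  refine ge_of_tendsto hlim ?_
  filter_upwards [Ioc_mem_nhdsGT one_pos] with t ht
  refine nonneg_of_mul_nonneg_right ?_ ht.1
  linarith [h t ht]

section InnerProductSpace

variable {H : Type*} [NormedAddCommGroup H] [InnerProductSpace ℝ H]

lemma Convex.nonneg_of_isMinOn_of_eq_quadratic {K : Set H} (hK : Convex ℝ K) {φ : H → ℝ}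
    {u v : H} (hmin : IsMinOn φ K u) (hu : u ∈ K) (hv : v ∈ K) {D Q : ℝ}
    (hφ : ∀ t : ℝ, φ (u + t • (v - u)) = φ u + t * D + t ^ 2 * Q) : 0 ≤ D := by
  refine nonneg_of_forall_mul_add_sq_mul_nonneg (Q := Q) fun t ht => ?_
  have := isMinOn_iff.mp hmin _ (hK.add_smul_sub_mem hu hv (Ioc_subset_Icc_self ht))
  linarith [hφ t]

lemma Convex.inner_sub_le_zero_of_forall_norm_sub_le {K : Set H} (hK : Convex ℝ K) {x p : H}
    (hp : p ∈ K) (hnearest : ∀ y ∈ K, ‖p - x‖ ≤ ‖y - x‖) : ∀ y ∈ K, ⟪x - p, y - p⟫ ≤ 0 := by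
  have : Nonempty K := ⟨⟨p, hp⟩⟩
  refine (norm_eq_iInf_iff_real_inner_le_zero hK hp).mp (le_antisymm ?_ ?_)
  · exact le_ciInf fun y => by simpa only [norm_sub_rev x] using hnearest y y.2
  · exact ciInf_le ⟨0, by rintro _ ⟨y, rfl⟩; exact norm_nonneg (x - y)⟩ (⟨p, hp⟩ : K)

/-- Nonexpansiveness of projections onto a convex set, phrased through the variational
inequalities `hp`, `hq` that characterise `p` and `q` as projections of `a` and `b`. -/
lemma norm_sub_le_of_inner_sub_nonpos {a b p q : H} (hp : ⟪a - p, q - p⟫ ≤ 0)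
    (hq : ⟪b - q, p - q⟫ ≤ 0) : ‖p - q‖ ≤ ‖a - b‖ := by
  have hsplit : ⟪a - b, p - q⟫ = ‖p - q‖ ^ 2 - ⟪a - p, q - p⟫ - ⟪b - q, p - q⟫ := by
    rw [← real_inner_self_eq_norm_sq, ← neg_sub p q, inner_neg_right]
    simp only [inner_sub_left]
    ring
  have hcs := real_inner_le_norm (a - b) (p - q)
  nlinarith [norm_nonneg (p - q), norm_nonneg (a - b)]

variable (S : H →L[ℝ] H) (l : ℝ) (f : H)

noncomputable def energy (u : H) : ℝ :=
  -(1/2) * ⟪u, S u - u⟫ + (l/2) * ⟪u - f, S (u - f)⟫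

/-- `u - gradientStep S l f u` is the gradient of `energy S l f` at `u`. -/
def gradientStep (u : H) : H :=
  S ((1 - l) • u + l • f)

variable {S l f}

lemma energy_add_smul (hS : (S : H →ₗ[ℝ] H).IsSymmetric) (u w : H) (t : ℝ) :
    energy S l f (u + t • w) = energy S l f u + t * ⟪u - gradientStep S l f u, w⟫
      + t ^ 2 * (‖w‖ ^ 2 / 2 - (1 - l) / 2 * ⟪w, S w⟫) := by
  have hswap (x y : H) : ⟪x, S y⟫ = ⟪y, S x⟫ := by rw [real_inner_comm]; exact hS y x
  simp only [energy, gradientStep, inner_sub_left, inner_sub_right, inner_add_left,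
    inner_add_right, real_inner_smul_left, real_inner_smul_right, map_add, map_smul, map_sub,
    ← real_inner_self_eq_norm_sq, real_inner_comm _ (S _)]
  rw [hswap w u, hswap f u, hswap w f, real_inner_comm w u]
  ring

lemma inner_gradientStep_sub_le_zero_of_isMinOn (hS : (S : H →ₗ[ℝ] H).IsSymmetric)
    {K : Set H} (hK : Convex ℝ K) {u : H} (hmin : IsMinOn (energy S l f) K u) (hu : u ∈ K) :
    ∀ v ∈ K, ⟪gradientStep S l f u - u, v - u⟫ ≤ 0 := by
  intro v hv
  have := hK.nonneg_of_isMinOn_of_eq_quadratic hmin hu hv (energy_add_smul hS u (v - u))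
  rwa [← neg_sub, inner_neg_left, neg_nonneg] at this

lemma norm_gradientStep_sub_le (hS : ∀ u, ‖S u‖ ≤ ‖u‖) (hl : l ≤ 1) (x y : H) :
    ‖gradientStep S l f x - gradientStep S l f y‖ ≤ (1 - l) * ‖x - y‖ := calc
  _ = ‖S ((1 - l) • (x - y))‖ := by
    rw [gradientStep, gradientStep, ← map_sub]
    congr 2
    module
  _ ≤ ‖(1 - l) • (x - y)‖ := hS _
  _ = (1 - l) * ‖x - y‖ := by rw [norm_smul, Real.norm_of_nonneg (sub_nonneg.2 hl)]

end InnerProductSpace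

theorem stmt_9_general {H : Type*} [NormedAddCommGroup H] [InnerProductSpace ℝ H]
    (S : H →L[ℝ] H)
    (hsa : ∀ u v : H, ⟪S u, v⟫ = ⟪u, S v⟫)
    (hcontr : ∀ u : H, ‖S u‖ ≤ ‖u‖)
    (l : ℝ) (hl0 : 0 < l) (hl1 : l < 1) (f : H)
    (E : H → ℝ)
    (hE : ∀ u : H, E u = -(1/2) * ⟪u, S u - u⟫ + (l/2) * ⟪u - f, S (u - f)⟫)
    (K : Set H) (hKv : Convex ℝ K)
    (proj : H → H)
    (hproj : ∀ x : H, proj x ∈ K ∧ ∀ y ∈ K, ‖proj x - x‖ ≤ ‖y - x‖)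
    (ustar : H) (hmem : ustar ∈ K)
    (hmin : ∀ v ∈ K, E ustar ≤ E v)
    (u : ℕ → H)
    (hrec : ∀ n, u (n+1) = proj (S ((1 - l) • u n + l • f))) :
    (∀ n, ‖u n - ustar‖ ≤ (1 - l)^n * ‖u 0 - ustar‖) ∧
    Filter.Tendsto u Filter.atTop (nhds ustar) := by
  obtain rfl : E = energy S l f := funext hE
  have hstar := inner_gradientStep_sub_le_zero_of_isMinOn hsa hKv (isMinOn_iff.mpr hmin) hmem
  have hstep (n : ℕ) : ‖u (n + 1) - ustar‖ ≤ (1 - l) * ‖u n - ustar‖ := by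
    obtain ⟨hprojK, hnearest⟩ := hproj (gradientStep S l f (u n))
    calc ‖u (n + 1) - ustar‖ ≤ ‖gradientStep S l f (u n) - gradientStep S l f ustar‖ := by
          rw [hrec n]
          exact norm_sub_le_of_inner_sub_nonpos
            (hKv.inner_sub_le_zero_of_forall_norm_sub_le hprojK hnearest _ hmem)
            (hstar _ hprojK)
      _ ≤ (1 - l) * ‖u n - ustar‖ := norm_gradientStep_sub_le hcontr hl1.le _ _
  have hbound (n : ℕ) :=
    le_geom (u := fun n => ‖u n - ustar‖) (sub_nonneg.2 hl1.le) n fun k _ => hstep k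
  refine ⟨hbound, tendsto_iff_norm_sub_tendsto_zero.mpr ?_⟩
  refine squeeze_zero (fun n => norm_nonneg _) hbound ?_
  simpa using (tendsto_pow_atTop_nhds_zero_of_lt_one (sub_nonneg.2 hl1.le)
    (sub_lt_self 1 hl0)).mul_const ‖u 0 - ustar‖

theorem stmt_9 {H : Type*} [NormedAddCommGroup H] [InnerProductSpace ℝ H] [CompleteSpace H]
    (S : H →L[ℝ] H)
    (hsa : ∀ u v : H, ⟪S u, v⟫ = ⟪u, S v⟫)
    (hpos : ∀ u : H, 0 ≤ ⟪S u, u⟫)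
    (hcontr : ∀ u : H, ‖S u‖ ≤ ‖u‖)
    (l : ℝ) (hl0 : 0 < l) (hl1 : l < 1) (f : H)
    (E : H → ℝ)
    (hE : ∀ u : H, E u = -(1/2) * ⟪u, S u - u⟫ + (l/2) * ⟪u - f, S (u - f)⟫)
    (K : Set H) (hK : K.Nonempty) (hKc : IsClosed K) (hKv : Convex ℝ K)
    (proj : H → H)
    (hproj : ∀ x : H, proj x ∈ K ∧ ∀ y ∈ K, ‖proj x - x‖ ≤ ‖y - x‖)
    (ustar : H) (hmem : ustar ∈ K)
    (hmin : ∀ v ∈ K, E ustar ≤ E v)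
    (huniq : ∀ w ∈ K, (∀ v ∈ K, E w ≤ E v) → w = ustar)
    (u : ℕ → H)
    (hrec : ∀ n, u (n+1) = proj (S ((1 - l) • u n + l • f))) :
    (∀ n, ‖u n - ustar‖ ≤ (1 - l)^n * ‖u 0 - ustar‖) ∧
    Filter.Tendsto u Filter.atTop (nhds ustar) :=
  stmt_9_general S hsa hcontr l hl0 hl1 f E hE K hKv proj hproj ustar hmem hmin u hrec
end
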